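/- arXiv:2201.07276 — 2 statements merged into one kernel-verified Lean document; each statement's English description precedes it below -/
import Mathlib

section
/- For every integer i ≥ 2 and radius t > 0, the Lebesgue measure of the set of (y_1,…,y_{i−1}) ∈ (ℝ²)^{i−1} such that the geometric graph on the points {0, y_1, …, y_{i−1}} with connectivity radius t is connected, is at most i^{i−2} (π t²)^{i−1}. -/
/-!
If the geometric graph on `0, y₁, …, y_k` is connected, let each `yⱼ` choose a neighbour strictly
closer to `0` in graph distance. This parent map is the parent function of a spanning tree rooted
at `0` all of whose edges have length at most `t`. Parent functions of rooted trees are determined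
by their Prüfer code, a word of length `k - 1` over `k + 1` letters, so there are at most
`(k + 1) ^ (k - 1)` of them (Cayley). For a fixed tree, integrating the points out leaves first,
each `yⱼ` ranges over a disc of area `π t²` around its parent, so the configurations compatible
with the tree have measure at most `(π t²) ^ k`.
-/

open MeasureTheory Finset Function
open scoped ENNReal

namespace Prufer

variable {α : Type*}

def AcyclicOn (p : α → α) (V : Finset α) : Prop := ∃ r : α → ℕ, ∀ v ∈ V, r (p v) < r v

theorem AcyclicOn.mono {p : α → α} {V W : Finset α} (h : AcyclicOn p V) (hWV : W ⊆ V) :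
    AcyclicOn p W :=
  let ⟨r, hr⟩ := h
  ⟨r, fun v hv => hr v (hWV hv)⟩

theorem AcyclicOn.apply_ne {p : α → α} {V : Finset α} (h : AcyclicOn p V) {v : α} (hv : v ∈ V) :
    p v ≠ v := by
  obtain ⟨r, hr⟩ := h
  intro hpv
  have := hr v hv
  rw [hpv] at this
  exact lt_irrefl _ this

variable [LinearOrder α] (p : α → α)

def leaves (V : Finset α) : Finset α := {v ∈ V | ∀ w ∈ V, p w ≠ v}

def code : ℕ → Finset α → List α
  | 0, _ => []
  | n + 1, V =>
    if h : (leaves p V).Nonempty then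
      p ((leaves p V).max' h) :: code n (V.erase ((leaves p V).max' h))
    else []

variable {p} {V : Finset α} {n : ℕ}

theorem mem_leaves {u : α} : u ∈ leaves p V ↔ u ∈ V ∧ ∀ w ∈ V, p w ≠ u := mem_filter

theorem code_succ (h : (leaves p V).Nonempty) :
    code p (n + 1) V = p ((leaves p V).max' h) :: code p n (V.erase ((leaves p V).max' h)) :=
  dif_pos h

theorem AcyclicOn.leaves_nonempty (h : AcyclicOn p V) (hV : V.Nonempty) :
    (leaves p V).Nonempty := by
  obtain ⟨r, hr⟩ := h
  obtain ⟨v, hv, hmax⟩ := V.exists_max_image r hV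
  refine ⟨v, mem_leaves.2 ⟨hv, fun w hw hpw => ?_⟩⟩
  have := hr w hw
  have := hmax w hw
  rw [hpw] at *
  omega

theorem AcyclicOn.length_code (h : AcyclicOn p V) (hn : n ≤ #V) : (code p n V).length = n := by
  induction n generalizing V with
  | zero => rfl
  | succ n ih =>
    have hl := h.leaves_nonempty (card_pos.1 (by omega))
    have hu := (mem_leaves.1 ((leaves p V).max'_mem hl)).1
    rw [code_succ hl, List.length_cons,
      ih (h.mono (erase_subset _ _)) (by rw [card_erase_of_mem hu]; omega)]

theorem exists_apply_eq_of_mem_code {x : α} (hx : x ∈ code p n V) : ∃ w ∈ V, p w = x := by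
  induction n generalizing V with
  | zero => simp [code] at hx
  | succ n ih =>
    rw [code] at hx
    split_ifs at hx with hl
    · rcases List.mem_cons.1 hx with rfl | hx
      · exact ⟨_, (mem_leaves.1 (max'_mem _ hl)).1, rfl⟩
      · obtain ⟨w, hw, rfl⟩ := ih hx
        exact ⟨w, mem_of_mem_erase hw, rfl⟩
    · simp at hx

theorem AcyclicOn.apply_mem_code (h : AcyclicOn p V) (hV : #V = n + 1) {w : α} (hw : w ∈ V)
    (hpw : p w ∈ V) : p w ∈ code p n V := by
  induction n generalizing V with
  | zero =>
    obtain ⟨v, rfl⟩ := card_eq_one.1 hV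
    exact absurd ((mem_singleton.1 hpw).trans (mem_singleton.1 hw).symm) (h.apply_ne hw)
  | succ n ih =>
    have hl := h.leaves_nonempty ⟨w, hw⟩
    obtain ⟨hu, hleaf⟩ := mem_leaves.1 ((leaves p V).max'_mem hl)
    rw [code_succ hl]
    by_cases hwu : w = (leaves p V).max' hl
    · rw [hwu]
      exact List.mem_cons_self
    · exact List.mem_cons_of_mem _ <| ih (h.mono (erase_subset _ _))
        (by rw [card_erase_of_mem hu]; omega) (mem_erase.2 ⟨hwu, hw⟩)
        (mem_erase.2 ⟨hleaf w hw, hpw⟩)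

theorem AcyclicOn.leaves_eq_filter_notMem_code (h : AcyclicOn p V) (hV : #V = n + 1) :
    leaves p V = {v ∈ V | v ∉ code p n V} := by
  ext v
  simp only [mem_leaves, mem_filter, and_congr_right_iff]
  refine fun hv => ⟨fun hleaf hmem => ?_,
    fun hnot w hw hpw => hnot (hpw ▸ h.apply_mem_code hV hw (hpw ▸ hv))⟩
  obtain ⟨w, hw, hpw⟩ := exists_apply_eq_of_mem_code hmem
  exact hleaf w hw hpw

theorem forall_apply_mem_insert_erase {r u : α} (hV : ∀ v ∈ V, p v ∈ insert r V)
    (hu : u ∈ leaves p V) : ∀ v ∈ V.erase u, p v ∈ insert r (V.erase u) := by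
  intro v hv
  have hvV := mem_of_mem_erase hv
  rcases mem_insert.1 (hV v hvV) with h | h
  · exact mem_insert.2 (Or.inl h)
  · exact mem_insert.2 (Or.inr (mem_erase.2 ⟨(mem_leaves.1 hu).2 v hvV, h⟩))

/-- The code omits the parent of the last remaining vertex, which can only be `r`. -/
theorem eqOn_of_code_eq {q : α → α} {r : α} (hp : AcyclicOn p V) (hq : AcyclicOn q V)
    (hpV : ∀ v ∈ V, p v ∈ insert r V) (hqV : ∀ v ∈ V, q v ∈ insert r V) (hV : #V = n + 1)
    (hcode : code p n V = code q n V) : ∀ v ∈ V, p v = q v := by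
  induction n generalizing V with
  | zero =>
    obtain ⟨v, rfl⟩ := card_eq_one.1 hV
    have root : ∀ f : α → α, AcyclicOn f {v} → (∀ w ∈ ({v} : Finset α), f w ∈ insert r {v}) →
        f v = r := fun f hf hfV =>
      (mem_insert.1 (hfV v (mem_singleton_self v))).resolve_right
        fun h => hf.apply_ne (mem_singleton_self v) (mem_singleton.1 h)
    intro w hw
    rw [mem_singleton.1 hw, root p hp hpV, root q hq hqV]
  | succ n ih =>
    intro v hv
    have hlp := hp.leaves_nonempty ⟨v, hv⟩
    -- the leaves are the vertices missing from the code, so both codes delete the same vertex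
    have hleaves : leaves p V = leaves q V := by
      rw [hp.leaves_eq_filter_notMem_code hV, hq.leaves_eq_filter_notMem_code hV, hcode]
    have hlq : (leaves q V).Nonempty := hleaves ▸ hlp
    have hmax : (leaves p V).max' hlp = (leaves q V).max' hlq := by congr 1
    rw [code_succ hlp, code_succ hlq, ← hmax] at hcode
    set u := (leaves p V).max' hlp
    have hu : u ∈ leaves p V := max'_mem _ _
    obtain ⟨hhead, htail⟩ := List.cons_eq_cons.1 hcode
    by_cases hvu : v = u
    · rwa [hvu]
    · exact ih (hp.mono (erase_subset _ _)) (hq.mono (erase_subset _ _))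
        (forall_apply_mem_insert_erase hpV hu)
        (forall_apply_mem_insert_erase hqV (hleaves ▸ hu))
        (by rw [card_erase_of_mem (mem_leaves.1 hu).1]; omega) htail v (mem_erase.2 ⟨hvu, hv⟩)

end Prufer

/-- `P j` is the parent of vertex `j.succ`, and vertex `0` is the root. -/
def IsRootedTree {k : ℕ} (P : Fin k → Fin (k + 1)) : Prop :=
  ∃ r : Fin (k + 1) → ℕ, ∀ j, r (P j) < r j.succ

theorem IsRootedTree.acyclicOn_cons {k : ℕ} {P : Fin k → Fin (k + 1)} (h : IsRootedTree P) :
    Prufer.AcyclicOn (Fin.cons 0 P : Fin (k + 1) → Fin (k + 1)) (univ.erase 0) := by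
  obtain ⟨r, hr⟩ := h
  refine ⟨r, fun v hv => ?_⟩
  obtain ⟨j, rfl⟩ := Fin.exists_succ_eq_of_ne_zero (ne_of_mem_erase hv)
  simpa using hr j

theorem card_le_of_isRootedTree {k : ℕ} (S : Finset (Fin k → Fin (k + 1)))
    (hS : ∀ P ∈ S, IsRootedTree P) : #S ≤ (k + 1) ^ (k - 1) := by
  cases k with
  | zero => simpa using card_le_one.2 fun _ _ _ _ => Subsingleton.elim _ _
  | succ k =>
    let code (P : Fin (k + 1) → Fin (k + 2)) :=
      Prufer.code (Fin.cons 0 P : Fin (k + 2) → Fin (k + 2)) k (univ.erase 0)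
    have hlen : ∀ P ∈ S, (code P).length = k := fun P hP =>
      (hS P hP).acyclicOn_cons.length_code (by simp)
    calc #S ≤ #(univ : Finset (Fin k → Fin (k + 2))) := by
          refine card_le_card_of_injOn (fun P i => (code P).getD i 0) (fun _ _ => mem_univ _) ?_
          intro P hP Q hQ hPQ
          have hcode : code P = code Q := List.ext_getElem (by rw [hlen P hP, hlen Q hQ])
            fun i h₁ h₂ => by
              simpa [List.getD_eq_getElem, h₁, h₂] using congrFun hPQ ⟨i, hlen P hP ▸ h₁⟩
          funext j
          simpa using Prufer.eqOn_of_code_eq (r := 0) (hS P hP).acyclicOn_cons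
            (hS Q hQ).acyclicOn_cons (by simp) (by simp) (by simp) hcode j.succ (by simp)
      _ = (k + 1 + 1) ^ (k + 1 - 1) := by simp

theorem SimpleGraph.Reachable.exists_adj_dist_lt {V : Type*} {G : SimpleGraph V} {u v : V}
    (h : G.Reachable v u) (hne : v ≠ u) : ∃ w, G.Adj v w ∧ G.dist w u < G.dist v u := by
  obtain ⟨p, hp⟩ := h.exists_walk_length_eq_dist
  cases p with
  | nil => exact absurd rfl hne
  | cons hadj q =>
    refine ⟨_, hadj, (SimpleGraph.dist_le q).trans_lt ?_⟩
    rw [← hp, SimpleGraph.Walk.length_cons]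
    omega

theorem SimpleGraph.Connected.exists_isRootedTree {k : ℕ} {G : SimpleGraph (Fin (k + 1))}
    (hG : G.Connected) : ∃ P : Fin k → Fin (k + 1), IsRootedTree P ∧ ∀ j, G.Adj j.succ (P j) := by
  choose P hadj hdist using fun j : Fin k => (hG j.succ 0).exists_adj_dist_lt (Fin.succ_ne_zero j)
  exact ⟨P, ⟨fun v => G.dist v 0, hdist⟩, hadj⟩

section NearParents

variable {E : Type*} [PseudoMetricSpace E] {k : ℕ}

def nearParents (o : E) (t : ℝ) (P : Fin k → Fin (k + 1)) (s : Finset (Fin k)) :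
    Set (Fin k → E) :=
  {y | ∀ j ∈ s, dist (y j) ((Fin.cons o y : Fin (k + 1) → E) (P j)) ≤ t}

theorem exists_isRootedTree_mem_nearParents {o : E} {t : ℝ} {y : Fin k → E}
    (hy : (SimpleGraph.fromRel fun a b : Fin (k + 1) => dist ((Fin.cons o y : Fin (k + 1) → E) a)
      ((Fin.cons o y : Fin (k + 1) → E) b) ≤ t).Connected) :
    ∃ P, IsRootedTree P ∧ y ∈ nearParents o t P univ := by
  obtain ⟨P, hP, hadj⟩ := hy.exists_isRootedTree
  refine ⟨P, hP, fun j _ => ?_⟩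
  have hedge := (SimpleGraph.fromRel_adj _ _ _).1 (hadj j) |>.2
  rw [Fin.cons_succ, dist_comm _ (y j)] at hedge
  exact hedge.elim id id

theorem update_mem_nearParents_insert_iff {o : E} {t : ℝ} {P : Fin k → Fin (k + 1)}
    {s : Finset (Fin k)} {j₀ : Fin k} (hj₀ : j₀ ∉ s) (hP : ∀ j ∈ insert j₀ s, P j ≠ j₀.succ)
    (x : Fin k → E) (ξ : E) :
    update x j₀ ξ ∈ nearParents o t P (insert j₀ s) ↔
      ξ ∈ Metric.closedBall ((Fin.cons o x : Fin (k + 1) → E) (P j₀)) t ∧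
        x ∈ nearParents o t P s := by
  have hcons : ∀ j ∈ insert j₀ s, (Fin.cons o (update x j₀ ξ) : Fin (k + 1) → E) (P j) =
      (Fin.cons o x : Fin (k + 1) → E) (P j) := fun j hj => by
    rw [Fin.cons_update, update_of_ne (hP j hj)]
  simp only [nearParents, Set.mem_ofPred_eq, forall_mem_insert, update_self,
    hcons j₀ (mem_insert_self j₀ s), Metric.mem_closedBall]
  refine and_congr Iff.rfl (forall₂_congr fun j hj => ?_)
  rw [update_of_ne (ne_of_mem_of_not_mem hj hj₀), hcons j (mem_insert_of_mem hj)]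

variable [MeasurableSpace E] [OpensMeasurableSpace E]

theorem lintegral_indicator_nearParents_update_le (μ : Measure E) {o : E} {t : ℝ} {a : ℝ≥0∞}
    (hμ : ∀ c, μ (Metric.closedBall c t) ≤ a) {P : Fin k → Fin (k + 1)} {s : Finset (Fin k)}
    {j₀ : Fin k} (hj₀ : j₀ ∉ s) (hP : ∀ j ∈ insert j₀ s, P j ≠ j₀.succ) (x : Fin k → E) :
    ∫⁻ ξ, (nearParents o t P (insert j₀ s)).indicator 1 (update x j₀ ξ) ∂μ ≤
      (nearParents o t P s).indicator 1 x * a := by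
  have hfiber : ∀ ξ,
      (nearParents o t P (insert j₀ s)).indicator (1 : (Fin k → E) → ℝ≥0∞) (update x j₀ ξ) =
      (nearParents o t P s).indicator 1 x *
        (Metric.closedBall ((Fin.cons o x : Fin (k + 1) → E) (P j₀)) t).indicator 1 ξ := by
    intro ξ
    classical
    by_cases hξ : ξ ∈ Metric.closedBall ((Fin.cons o x : Fin (k + 1) → E) (P j₀)) t <;>
      by_cases hx : x ∈ nearParents o t P s <;>
      simp [update_mem_nearParents_insert_iff hj₀ hP, hξ, hx]
  simp_rw [hfiber]
  rw [lintegral_const_mul _ (measurable_one.indicator measurableSet_closedBall),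
    lintegral_indicator_one measurableSet_closedBall]
  gcongr
  exact hμ _

variable [SecondCountableTopology E]

theorem measurableSet_nearParents (o : E) (t : ℝ) (P : Fin k → Fin (k + 1))
    (s : Finset (Fin k)) : MeasurableSet (nearParents o t P s) := by
  have hcons : Continuous fun y : Fin k → E => (Fin.cons o y : Fin (k + 1) → E) :=
    continuous_const.finCons continuous_id
  simp only [nearParents, Set.ofPred_forall]
  exact (isClosed_biInter fun j _ => isClosed_le ((continuous_apply j).dist
    ((continuous_apply (P j)).comp hcons)) continuous_const).measurableSet

theorem lmarginal_indicator_nearParents_le (μ : Measure E) [SigmaFinite μ] {o : E} {t : ℝ}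
    {a : ℝ≥0∞} (hμ : ∀ c, μ (Metric.closedBall c t) ≤ a) {P : Fin k → Fin (k + 1)}
    (hP : IsRootedTree P) (s : Finset (Fin k)) (x : Fin k → E) :
    (∫⋯∫⁻_s, (nearParents o t P s).indicator 1 ∂fun _ => μ) x ≤ a ^ #s := by
  obtain ⟨r, hr⟩ := hP
  induction s using Finset.induction_on_max_value (f := fun j : Fin k => r j.succ)
    generalizing x with
  | empty => simp [nearParents]
  | insert j₀ s hj₀ hmax ih =>
    -- `j₀` has maximal rank, so it is nobody's parent: `y j₀` enters only its own constraint
    have hP : ∀ j ∈ insert j₀ s, P j ≠ j₀.succ := by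
      intro j hj hPj
      have := hr j
      rw [hPj] at this
      rcases mem_insert.1 hj with rfl | hj
      · exact lt_irrefl _ this
      · exact (hmax j hj).not_gt this
    rw [lmarginal_insert' _ (measurable_one.indicator (measurableSet_nearParents ..)) hj₀]
    calc _ ≤ (∫⋯∫⁻_s, fun y => (nearParents o t P s).indicator 1 y * a ∂fun _ => μ) x :=
          lmarginal_mono (fun y => lintegral_indicator_nearParents_update_le μ hμ hj₀ hP y) x
      _ = (∫⋯∫⁻_s, (nearParents o t P s).indicator 1 ∂fun _ => μ) x * a :=
          lintegral_mul_const a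
            ((measurable_one.indicator (measurableSet_nearParents ..)).comp measurable_updateFinset)
      _ ≤ a ^ #s * a := by gcongr; exact ih x
      _ = a ^ #(insert j₀ s) := by rw [card_insert_of_notMem hj₀, pow_succ]

theorem pi_nearParents_univ_le (μ : Measure E) [SigmaFinite μ] (o : E) {t : ℝ} {a : ℝ≥0∞}
    (hμ : ∀ c, μ (Metric.closedBall c t) ≤ a) {P : Fin k → Fin (k + 1)} (hP : IsRootedTree P) :
    Measure.pi (fun _ => μ) (nearParents o t P univ) ≤ a ^ k := by
  rw [← lintegral_indicator_one (measurableSet_nearParents ..),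
    lintegral_eq_lmarginal_univ fun _ => o]
  simpa using lmarginal_indicator_nearParents_le μ hμ hP univ fun _ => o

end NearParents

theorem EuclideanSpace.volume_closedBall_fin_two_le (c : EuclideanSpace ℝ (Fin 2)) (t : ℝ) :
    volume (Metric.closedBall c t) ≤ ENNReal.ofReal (Real.pi * t ^ 2) := by
  rw [EuclideanSpace.volume_closedBall_fin_two]
  rcases le_or_gt 0 t with ht | ht
  · rw [← ENNReal.ofReal_pow ht, ← ENNReal.ofReal_mul (by positivity), mul_comm]
  · simp [ENNReal.ofReal_of_nonpos ht.le]

theorem volume_connected_geometric_graph_le_general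
    (k : ℕ) (t : ℝ) :
    volume {y : Fin k → EuclideanSpace ℝ (Fin 2) |
        (SimpleGraph.fromRel (fun a b : Fin (k + 1) =>
          dist ((Fin.cons 0 y : Fin (k + 1) → EuclideanSpace ℝ (Fin 2)) a)
            ((Fin.cons 0 y : Fin (k + 1) → EuclideanSpace ℝ (Fin 2)) b) ≤ t)).Connected}
      ≤ ENNReal.ofReal ((k + 1 : ℝ) ^ (k - 1) * (Real.pi * t ^ 2) ^ k) := by
  classical
  let T : Finset (Fin k → Fin (k + 1)) := {P | IsRootedTree P}
  have hT : ∀ P ∈ T, IsRootedTree P := fun P hP => (mem_filter.1 hP).2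
  let near (P : Fin k → Fin (k + 1)) := nearParents (0 : EuclideanSpace ℝ (Fin 2)) t P univ
  calc _ ≤ volume (⋃ P ∈ T, near P) := measure_mono fun y hy => by
        obtain ⟨P, hP, hy⟩ := exists_isRootedTree_mem_nearParents hy
        exact Set.mem_iUnion₂.2 ⟨P, mem_filter.2 ⟨mem_univ P, hP⟩, hy⟩
    _ ≤ ∑ P ∈ T, volume (near P) := measure_biUnion_finset_le _ _
    _ ≤ ∑ _P ∈ T, ENNReal.ofReal (Real.pi * t ^ 2) ^ k := sum_le_sum fun P hP => by
        rw [volume_pi]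
        exact pi_nearParents_univ_le volume 0 (EuclideanSpace.volume_closedBall_fin_two_le · t)
          (hT P hP)
    _ = #T * ENNReal.ofReal (Real.pi * t ^ 2) ^ k := by rw [sum_const, nsmul_eq_mul]
    _ ≤ ((k + 1) ^ (k - 1) : ℕ) * ENNReal.ofReal (Real.pi * t ^ 2) ^ k := by
        gcongr
        exact card_le_of_isRootedTree T hT
    _ = ENNReal.ofReal ((k + 1 : ℝ) ^ (k - 1) * (Real.pi * t ^ 2) ^ k) := by
        rw [← ENNReal.ofReal_natCast, ← ENNReal.ofReal_pow (by positivity),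
          ← ENNReal.ofReal_mul (by positivity)]
        push_cast
        rfl

/-- Volume bound for connected geometric graphs in the plane: for `i = k + 1 ≥ 2`
points and radius `t > 0`, the Lebesgue measure of the set of
`(y_1, …, y_{i−1}) ∈ (ℝ²)^{i−1}` such that the geometric graph with radius `t` on
the points `{0, y_1, …, y_{i−1}}` is connected is at most `i^{i−2} (π t²)^{i−1}`. -/
theorem volume_connected_geometric_graph_le
    (k : ℕ) (hk : 1 ≤ k) (t : ℝ) (ht : 0 < t) :
    volume {y : Fin k → EuclideanSpace ℝ (Fin 2) |
        (SimpleGraph.fromRel (fun a b : Fin (k + 1) =>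
          dist ((Fin.cons 0 y : Fin (k + 1) → EuclideanSpace ℝ (Fin 2)) a)
            ((Fin.cons 0 y : Fin (k + 1) → EuclideanSpace ℝ (Fin 2)) b) ≤ t)).Connected}
      ≤ ENNReal.ofReal ((k + 1 : ℝ) ^ (k - 1) * (Real.pi * t ^ 2) ^ k) :=
  volume_connected_geometric_graph_le_general k t
end

section
/- The function I(x) = x log(x/μ) − x + μ (with I(0) = μ, I(x) = ∞ for x < 0) is the Cramér rate function for sums of i.i.d. Poisson(μ) random variables: for i.i.d. X_1, X_2, … ~ Poisson(μ) and any closed set F ⊆ ℝ, limsup_n (1/n) log P(n^{-1} Σ_{i=1}^n X_i ∈ F) ≤ − inf_{x∈F} I(x), and for any open set G, liminf_n (1/n) log P(n^{-1} Σ X_i ∈ G) ≥ − inf_{x∈G} I(x). -/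
/-!
The sum of `n` independent Poisson(μ) variables is Poisson(nμ), and the rate function scales as
`n * I_μ(x) = I_{nμ}(n x)`, so everything reduces to estimates for one Poisson law of large rate.

Upper bound: the Chernoff bound at the optimal tilt `t = log (a / μ)` gives
`Po(nμ)(k ≥ n a) ≤ exp (-n I(a))` for `a ≥ μ`, and symmetrically below `μ`. A closed set `F`
splits at `μ` into a part lying above its least point `a ≥ μ` and a part lying below its largest
point `b ∈ [0, μ]`, which gives the exponent `min (I a) (I b) ≥ inf_F I`.

Lower bound: the Stirling bound `k! ≤ e (k + 1) (k / e)^k` gives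
`Po(λ){k} ≥ exp (-I_λ(k)) / (e (k + 1))`; take `k = ⌈n x⌉` for a point `x` of the open set with
`I(x) < c`, and use continuity of `I` and that the factor `e (k + 1)` is subexponential in `n`.
-/

open MeasureTheory ProbabilityTheory Filter Real
open scoped NNReal ENNReal Topology Nat

namespace ProbabilityTheory

/-- At `x = 0` the junk value `log 0 = 0` gives the correct value `poissonRate r 0 = r`. -/
noncomputable def poissonRate (r x : ℝ) : ℝ := x * log (x / r) - x + r

lemma poissonRate_zero (r : ℝ) : poissonRate r 0 = r := by simp [poissonRate]

lemma poissonRate_mul (c r x : ℝ) : poissonRate (c * r) (c * x) = c * poissonRate r x := by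
  rcases eq_or_ne c 0 with rfl | hc
  · simp [poissonRate]
  · simp only [poissonRate, mul_div_mul_left x r hc]
    ring

lemma continuous_poissonRate {r : ℝ} (hr : r ≠ 0) : Continuous (poissonRate r) := by
  have h : poissonRate r = fun x ↦ r * ((x / r) * log (x / r)) - x + r := by
    ext x
    simp only [poissonRate]
    field_simp
  rw [h]
  have := continuous_mul_log.comp (continuous_id.div_const r)
  fun_prop

lemma hasSum_poissonMeasure_mul_exp (r : ℝ≥0) (t : ℝ) :
    HasSum (fun n : ℕ ↦ exp (-r) * r ^ n / n ! * exp (t * n)) (exp (r * (exp t - 1))) := by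
  have h := (NormedSpace.expSeries_div_hasSum_exp (r * exp t : ℝ)).mul_left (exp (-r))
  rw [← exp_eq_exp_ℝ, ← exp_add] at h
  have hterm : (fun n : ℕ ↦ exp (-r) * r ^ n / n ! * exp (t * n))
      = fun n ↦ exp (-r) * ((r * exp t) ^ n / n !) := by
    ext n
    rw [mul_pow, ← exp_nat_mul, mul_comm t]
    ring
  rwa [hterm, show r * (exp t - 1) = -r + r * exp t by ring]

lemma integrable_exp_mul_poissonMeasure (r : ℝ≥0) (t : ℝ) :
    Integrable (fun n : ℕ ↦ exp (t * n)) Po(r) := by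
  rw [integrable_poissonMeasure_iff]
  simpa only [norm_of_nonneg (exp_pos _).le] using (hasSum_poissonMeasure_mul_exp r t).summable

lemma mgf_poissonMeasure (r : ℝ≥0) (t : ℝ) :
    mgf (fun n : ℕ ↦ (n : ℝ)) Po(r) t = exp (r * (exp t - 1)) := by
  rw [mgf, integral_poissonMeasure, ← (hasSum_poissonMeasure_mul_exp r t).tsum_eq]
  rfl

lemma poissonMeasure_real_ge_le {r : ℝ≥0} (hr : 0 < r) {a : ℝ} (ha : r ≤ a) :
    Po(r).real {n | a ≤ n} ≤ exp (-poissonRate r a) := by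
  have hr' : (0 : ℝ) < r := hr
  have hexp : exp (log (a / r)) = a / r := exp_log (div_pos (hr'.trans_le ha) hr')
  calc Po(r).real {n | a ≤ n}
      ≤ exp (-log (a / r) * a) * mgf (fun n : ℕ ↦ (n : ℝ)) Po(r) (log (a / r)) :=
        measure_ge_le_exp_mul_mgf a (log_nonneg ((one_le_div hr').2 ha))
          (integrable_exp_mul_poissonMeasure r _)
    _ = exp (-poissonRate r a) := by
        rw [mgf_poissonMeasure, hexp, ← exp_add, poissonRate]
        congr 1
        field_simp
        ring

lemma poissonMeasure_real_le_le {r : ℝ≥0} {b : ℝ} (hb : 0 ≤ b) (hbr : b ≤ r) :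
    Po(r).real {n | (n : ℝ) ≤ b} ≤ exp (-poissonRate r b) := by
  rcases hb.eq_or_lt with rfl | hb
  · simp [poissonMeasure_real_singleton, poissonRate_zero]
  have hr : (0 : ℝ) < r := hb.trans_le hbr
  have hexp : exp (log (b / r)) = b / r := exp_log (div_pos hb hr)
  calc Po(r).real {n | (n : ℝ) ≤ b}
      ≤ exp (-log (b / r) * b) * mgf (fun n : ℕ ↦ (n : ℝ)) Po(r) (log (b / r)) :=
        measure_le_le_exp_mul_mgf b (log_nonpos (div_nonneg hb.le hr.le) ((div_le_one hr).2 hbr))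
          (integrable_exp_mul_poissonMeasure r _)
    _ = exp (-poissonRate r b) := by
        rw [mgf_poissonMeasure, hexp, ← exp_add, poissonRate]
        congr 1
        field_simp
        ring

lemma factorial_le_exp_one_mul (k : ℕ) : (k ! : ℝ) ≤ exp 1 * (k + 1) * (k / exp 1) ^ k := by
  cases k with
  | zero => simp
  | succ m =>
    have hseq : Stirling.stirlingSeq (m + 1) ≤ exp 1 / √2 := by
      simpa using Stirling.stirlingSeq'_antitone (Nat.zero_le m)
    have hsqrt : √(2 * (m + 1 : ℕ) : ℝ) ≤ √2 * ((m + 1 : ℕ) + 1) := by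
      rw [Real.sqrt_mul zero_le_two]
      gcongr
      refine Real.sqrt_le_iff.2 ⟨by positivity, by nlinarith⟩
    calc ((m + 1) ! : ℝ)
        = Stirling.stirlingSeq (m + 1)
            * (√(2 * (m + 1 : ℕ) : ℝ) * ((m + 1 : ℕ) / exp 1) ^ (m + 1)) := by
          rw [Stirling.stirlingSeq, div_mul_cancel₀]
          positivity
      _ ≤ exp 1 / √2 * (√2 * ((m + 1 : ℕ) + 1) * ((m + 1 : ℕ) / exp 1) ^ (m + 1)) := by
          gcongr
      _ = _ := by
          field_simp

lemma exp_neg_poissonRate_mul_pow (r : ℝ≥0) (hr : 0 < r) (k : ℕ) :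
    exp (-poissonRate r k) * (k / exp 1) ^ k = exp (-r) * r ^ k := by
  rcases k.eq_zero_or_pos with rfl | hk
  · simp [poissonRate_zero]
  have hk' : (0 : ℝ) < k := Nat.cast_pos.2 hk
  have hr' : (0 : ℝ) < r := hr
  rw [← exp_log (by positivity : 0 < (k / exp 1) ^ k), ← exp_log (pow_pos hr' k), ← exp_add,
    ← exp_add, log_pow, log_pow, log_div hk'.ne' (exp_pos 1).ne', log_exp, poissonRate,
    log_div hk'.ne' hr'.ne']
  ring_nf

lemma exp_neg_poissonRate_le_poissonMeasure_real (r : ℝ≥0) (hr : 0 < r) (k : ℕ) :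
    exp (-poissonRate r k) ≤ exp 1 * (k + 1) * Po(r).real {k} := by
  rw [poissonMeasure_real_singleton, ← exp_neg_poissonRate_mul_pow r hr, mul_div_assoc,
    ← mul_assoc, mul_comm _ (exp _), mul_assoc]
  refine le_mul_of_one_le_right (exp_pos _).le ?_
  rw [← mul_div_assoc, le_div_iff₀ (by positivity), one_mul]
  exact factorial_le_exp_one_mul k

set_option linter.deprecated false in
lemma poissonPMF_toMeasure (r : ℝ≥0) : (poissonPMF r).toMeasure = Po(r) :=
  Measure.ext_of_singleton fun k ↦ by
    rw [PMF.toMeasure_apply_singleton _ _ (measurableSet_singleton k), poissonMeasure_singleton,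
      ← poissonPMFReal_ofReal_eq_poissonPMF, poissonPMFReal]

lemma hasLaw_sum_range_poissonMeasure {Ω : Type*} [MeasurableSpace Ω] {P : Measure Ω}
    [IsProbabilityMeasure P] {r : ℝ≥0} {X : ℕ → Ω → ℕ} (hX : iIndepFun X P)
    (hlaw : ∀ i, HasLaw (X i) Po(r) P) (n : ℕ) :
    HasLaw (∑ i ∈ Finset.range n, X i) Po(n * r) P := by
  induction n with
  | zero =>
    have hPo : Po(0) = Measure.dirac 0 := Measure.ext_of_singleton fun k ↦ by
      cases k <;> simp [poissonMeasure_singleton]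
    simpa [hPo] using hasLaw_dirac_of_ae_eq (P := P) (X := 0) (x := 0) (by rfl)
  | succ n ih =>
    rw [Finset.sum_range_succ, Nat.cast_succ, add_one_mul]
    exact (hX.indepFun_finsetSum_of_notMem₀ (fun i ↦ (hlaw i).aemeasurable)
      Finset.notMem_range_self).hasLaw_add_poissonMeasure ih (hlaw n)

lemma eventually_mul_le_exp_mul (C : ℝ) {δ : ℝ} (hδ : 0 < δ) :
    ∀ᶠ n : ℕ in atTop, C * n ≤ exp (δ * n) := by
  have h := ((tendsto_exp_mul_div_rpow_atTop 1 δ hδ).comp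
    tendsto_natCast_atTop_atTop).eventually_ge_atTop C
  filter_upwards [h, eventually_gt_atTop 0] with n h hn
  have hn' : (0 : ℝ) < n := Nat.cast_pos.2 hn
  simpa [le_div_iff₀ hn'] using h

section Cramer

variable {μ : ℝ≥0} {c : ℝ}

lemma exists_gt_poissonMeasure_real_upper_le (hμ : 0 < μ) {F : Set ℝ} (hF : IsClosed F)
    (hc : ∀ x ∈ F, 0 ≤ x → c < poissonRate μ x) :
    ∃ ε > c, ∀ n : ℕ, 0 < n →
      Po(n * μ).real {k | (k : ℝ) / n ∈ F ∧ (μ : ℝ) ≤ k / n} ≤ exp (-(ε * n)) := by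
  by_cases hne : (F ∩ Set.Ici (μ : ℝ)).Nonempty
  swap
  · refine ⟨c + 1, by linarith, fun n _ ↦ ?_⟩
    have hempty : {k : ℕ | (k : ℝ) / n ∈ F ∧ (μ : ℝ) ≤ k / n} = ∅ :=
      Set.eq_empty_of_forall_notMem fun k hk ↦ hne ⟨_, hk⟩
    simp [hempty, (exp_pos _).le]
  have hbdd : BddBelow (F ∩ Set.Ici (μ : ℝ)) := ⟨μ, fun _ hy ↦ hy.2⟩
  set a := sInf (F ∩ Set.Ici (μ : ℝ))
  have ha : a ∈ F ∩ Set.Ici (μ : ℝ) := (hF.inter isClosed_Ici).csInf_mem hne hbdd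
  refine ⟨poissonRate μ a, hc a ha.1 (NNReal.coe_nonneg μ |>.trans ha.2), fun n hn ↦ ?_⟩
  have hn' : (0 : ℝ) < n := Nat.cast_pos.2 hn
  calc Po(n * μ).real {k | (k : ℝ) / n ∈ F ∧ (μ : ℝ) ≤ k / n}
      ≤ Po(n * μ).real {k | n * a ≤ k} := by
        refine measureReal_mono (fun k hk ↦ ?_)
        rw [Set.mem_ofPred_eq, ← le_div_iff₀' hn']
        exact csInf_le hbdd hk
    _ ≤ exp (-poissonRate (n * μ : ℝ≥0) (n * a)) :=
        poissonMeasure_real_ge_le (by positivity) (by push_cast; gcongr; exact ha.2)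
    _ = exp (-(poissonRate μ a * n)) := by
        push_cast
        rw [poissonRate_mul, mul_comm]

lemma exists_gt_poissonMeasure_real_lower_le {F : Set ℝ} (hF : IsClosed F)
    (hc : ∀ x ∈ F, 0 ≤ x → c < poissonRate μ x) :
    ∃ ε > c, ∀ n : ℕ, 0 < n →
      Po(n * μ).real {k | (k : ℝ) / n ∈ F ∧ (k : ℝ) / n ≤ μ} ≤ exp (-(ε * n)) := by
  by_cases hne : (F ∩ Set.Icc 0 (μ : ℝ)).Nonempty
  swap
  · refine ⟨c + 1, by linarith, fun n _ ↦ ?_⟩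
    have hempty : {k : ℕ | (k : ℝ) / n ∈ F ∧ (k : ℝ) / n ≤ μ} = ∅ :=
      Set.eq_empty_of_forall_notMem fun k hk ↦ hne ⟨_, hk.1, by positivity, hk.2⟩
    simp [hempty, (exp_pos _).le]
  have hbdd : BddAbove (F ∩ Set.Icc 0 (μ : ℝ)) := ⟨μ, fun _ hy ↦ hy.2.2⟩
  set b := sSup (F ∩ Set.Icc 0 (μ : ℝ))
  have hb : b ∈ F ∩ Set.Icc 0 (μ : ℝ) := (hF.inter isClosed_Icc).csSup_mem hne hbdd
  refine ⟨poissonRate μ b, hc b hb.1 hb.2.1, fun n hn ↦ ?_⟩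
  have hn' : (0 : ℝ) < n := Nat.cast_pos.2 hn
  calc Po(n * μ).real {k | (k : ℝ) / n ∈ F ∧ (k : ℝ) / n ≤ μ}
      ≤ Po(n * μ).real {k | (k : ℝ) ≤ n * b} := by
        refine measureReal_mono (fun k hk ↦ ?_)
        rw [Set.mem_ofPred_eq, ← div_le_iff₀' hn']
        exact le_csSup hbdd ⟨hk.1, by positivity, hk.2⟩
    _ ≤ exp (-poissonRate (n * μ : ℝ≥0) (n * b)) :=
        poissonMeasure_real_le_le (mul_nonneg n.cast_nonneg hb.2.1)
          (by push_cast; gcongr; exact hb.2.2)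
    _ = exp (-(poissonRate μ b * n)) := by
        push_cast
        rw [poissonRate_mul, mul_comm]

lemma eventually_poissonMeasure_real_le_exp (hμ : 0 < μ) {F : Set ℝ} (hF : IsClosed F)
    (hc : ∀ x ∈ F, 0 ≤ x → c < poissonRate μ x) :
    ∀ᶠ n : ℕ in atTop, Po(n * μ).real {k | (k : ℝ) / n ∈ F} ≤ exp (-c * n) := by
  obtain ⟨ε₁, hε₁, hupper⟩ := exists_gt_poissonMeasure_real_upper_le hμ hF hc
  obtain ⟨ε₂, hε₂, hlower⟩ := exists_gt_poissonMeasure_real_lower_le hF hc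
  set ε := min ε₁ ε₂
  have htwo : ∀ᶠ n : ℕ in atTop, 2 ≤ exp ((ε - c) * n) :=
    (tendsto_exp_atTop.comp <| tendsto_natCast_atTop_atTop.const_mul_atTop
      (sub_pos.2 (lt_min hε₁ hε₂))).eventually_ge_atTop 2
  filter_upwards [htwo, eventually_gt_atTop 0] with n htwo hn
  have hexp {ε' : ℝ} (h : ε ≤ ε') : exp (-(ε' * n)) ≤ exp (-(ε * n)) := by gcongr
  calc Po(n * μ).real {k | (k : ℝ) / n ∈ F}
      ≤ Po(n * μ).real ({k | (k : ℝ) / n ∈ F ∧ (μ : ℝ) ≤ k / n}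
          ∪ {k | (k : ℝ) / n ∈ F ∧ (k : ℝ) / n ≤ μ}) :=
        measureReal_mono fun k hk ↦ (le_total (μ : ℝ) (k / n)).imp (⟨hk, ·⟩) (⟨hk, ·⟩)
    _ ≤ exp (-(ε * n)) + exp (-(ε * n)) :=
        (measureReal_union_le _ _).trans (add_le_add ((hupper n hn).trans (hexp (min_le_left _ _)))
          ((hlower n hn).trans (hexp (min_le_right _ _))))
    _ ≤ exp ((ε - c) * n) * exp (-(ε * n)) := by rw [← two_mul]; gcongr
    _ = exp (-c * n) := by rw [← exp_add]; ring_nf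

lemma eventually_exp_le_poissonMeasure_real (hμ : 0 < μ) {G : Set ℝ} (hG : IsOpen G) {x : ℝ}
    (hxG : x ∈ G) (hx : 0 ≤ x) (hxc : poissonRate μ x < c) :
    ∀ᶠ n : ℕ in atTop, exp (-c * n) ≤ Po(n * μ).real {k | (k : ℝ) / n ∈ G} := by
  set m : ℕ → ℕ := fun n ↦ ⌈x * n⌉₊
  set c' := (poissonRate μ x + c) / 2
  have hm : Tendsto (fun n : ℕ ↦ (m n : ℝ) / n) atTop (𝓝 x) :=
    (tendsto_nat_ceil_mul_div_atTop hx).comp tendsto_natCast_atTop_atTop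
  have hmem : ∀ᶠ n : ℕ in atTop, (m n : ℝ) / n ∈ G := hm (hG.mem_nhds hxG)
  have hrate : ∀ᶠ n : ℕ in atTop, poissonRate μ (m n / n) < c' :=
    ((continuous_poissonRate (NNReal.coe_ne_zero.2 hμ.ne')).tendsto x |>.comp hm)
      |>.eventually_lt_const (by simp only [c']; linarith)
  have hpoly : ∀ᶠ n : ℕ in atTop, exp 1 * (x + 2) * n ≤ exp ((c - c') * n) :=
    eventually_mul_le_exp_mul _ (by simp only [c']; linarith)
  filter_upwards [hmem, hrate, hpoly, eventually_gt_atTop 0] with n hmem hrate hpoly hn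
  have hn' : (1 : ℝ) ≤ n := Nat.one_le_cast.2 hn
  have hmn : (m n : ℝ) + 1 ≤ (x + 2) * n := by
    nlinarith [Nat.ceil_lt_add_one (mul_nonneg hx (Nat.cast_nonneg n))]
  have hscale : poissonRate (n * μ : ℝ≥0) (m n) = n * poissonRate μ (m n / n) := by
    push_cast
    rw [← poissonRate_mul, mul_div_cancel₀ _ (by positivity)]
  rw [← mul_le_mul_iff_of_pos_left (by positivity : 0 < exp 1 * (m n + 1))]
  calc exp 1 * (m n + 1) * exp (-c * n)
      ≤ exp ((c - c') * n) * exp (-c * n) := by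
        gcongr
        calc exp 1 * (m n + 1) ≤ exp 1 * ((x + 2) * n) := by gcongr
          _ = _ := by ring
          _ ≤ _ := hpoly
    _ = exp (-(n * c')) := by rw [← exp_add]; ring_nf
    _ ≤ exp (-poissonRate (n * μ : ℝ≥0) (m n)) := by
        rw [hscale]
        gcongr
    _ ≤ exp 1 * (m n + 1) * Po(n * μ).real {m n} :=
        exp_neg_poissonRate_le_poissonMeasure_real _ (by positivity) _
    _ ≤ exp 1 * (m n + 1) * Po(n * μ).real {k | (k : ℝ) / n ∈ G} := by
        gcongr
        · finiteness
        · simpa using hmem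

end Cramer

end ProbabilityTheory

theorem cramer_poisson_general
    {Ω : Type*} [MeasurableSpace Ω] (P : Measure Ω) [IsProbabilityMeasure P]
    (μ : ℝ≥0) (hμ : 0 < μ)
    (X : ℕ → Ω → ℕ)
    (hiid : iIndepFun X P)
    (hlaw : ∀ i, Measure.map (X i) P = (poissonPMF μ).toMeasure) :
    (∀ F : Set ℝ, IsClosed F → ∀ c : ℝ,
      ENNReal.ofReal c < (⨅ x ∈ F, if x < 0 then (⊤ : ℝ≥0∞) else
          ENNReal.ofReal (x * Real.log (x / μ) - x + μ)) →
      ∀ᶠ n : ℕ in atTop,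
        (P {ω | (∑ i ∈ Finset.range n, (X i ω : ℝ)) / n ∈ F}).toReal
          ≤ Real.exp (-c * n)) ∧
    (∀ G : Set ℝ, IsOpen G → ∀ c : ℝ,
      (⨅ x ∈ G, if x < 0 then (⊤ : ℝ≥0∞) else
          ENNReal.ofReal (x * Real.log (x / μ) - x + μ)) < ENNReal.ofReal c →
      ∀ᶠ n : ℕ in atTop,
        Real.exp (-c * n)
          ≤ (P {ω | (∑ i ∈ Finset.range n, (X i ω : ℝ)) / n ∈ G}).toReal) := by
  have hlaw' (i : ℕ) : P.map (X i) = Po(μ) := (hlaw i).trans (poissonPMF_toMeasure μ)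
  have hsum (n : ℕ) : HasLaw (∑ i ∈ Finset.range n, X i) Po(n * μ) P :=
    hasLaw_sum_range_poissonMeasure hiid (fun i ↦
      ⟨.of_map_ne_zero ((hlaw' i).symm ▸ IsProbabilityMeasure.ne_zero _), hlaw' i⟩) n
  have hmean (n : ℕ) (A : Set ℝ) :
      (P {ω | (∑ i ∈ Finset.range n, (X i ω : ℝ)) / n ∈ A}).toReal
        = Po(n * μ).real {k | (k : ℝ) / n ∈ A} := by
    rw [← measureReal_def]
    simpa using (hsum n).measureReal_eq (p := fun k : ℕ ↦ (k : ℝ) / n ∈ A) .of_discrete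
  refine ⟨fun F hF c hc ↦ ?_, fun G hG c hc ↦ ?_⟩
  · simp only [hmean]
    refine eventually_poissonMeasure_real_le_exp hμ hF fun x hxF hx ↦ ?_
    have h := hc.trans_le (iInf₂_le x hxF)
    rw [if_neg hx.not_gt] at h
    exact (ENNReal.ofReal_lt_ofReal_iff'.1 h).1
  · obtain ⟨x, hxG, hx⟩ := by simpa only [iInf_lt_iff] using hc
    have hx0 : 0 ≤ x := not_lt.1 fun hneg ↦ by simp [hneg] at hx
    rw [if_neg hx0.not_gt] at hx
    simp only [hmean]
    exact eventually_exp_le_poissonMeasure_real hμ hG hxG hx0 (ENNReal.ofReal_lt_ofReal_iff'.1 hx).1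

/-- Cramér's theorem for i.i.d. Poisson(μ) random variables, with rate function
`I(x) = x log(x/μ) − x + μ` for `x ≥ 0` (so `I(0) = μ`) and `I(x) = ∞` for `x < 0`:
the empirical means satisfy the large deviation upper bound over closed sets and the
lower bound over open sets. The bounds `limsup (1/n) log P ≤ −inf_F I` and
`liminf (1/n) log P ≥ −inf_G I` are stated in the equivalent eventual-exponential
form. -/
theorem cramer_poisson
    {Ω : Type*} [MeasurableSpace Ω] (P : Measure Ω) [IsProbabilityMeasure P]
    (μ : ℝ≥0) (hμ : 0 < μ)
    (X : ℕ → Ω → ℕ) (hXmeas : ∀ i, Measurable (X i))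
    (hiid : iIndepFun X P)
    (hlaw : ∀ i, Measure.map (X i) P = (poissonPMF μ).toMeasure) :
    (∀ F : Set ℝ, IsClosed F → ∀ c : ℝ,
      ENNReal.ofReal c < (⨅ x ∈ F, if x < 0 then (⊤ : ℝ≥0∞) else
          ENNReal.ofReal (x * Real.log (x / μ) - x + μ)) →
      ∀ᶠ n : ℕ in atTop,
        (P {ω | (∑ i ∈ Finset.range n, (X i ω : ℝ)) / n ∈ F}).toReal
          ≤ Real.exp (-c * n)) ∧
    (∀ G : Set ℝ, IsOpen G → ∀ c : ℝ,
      (⨅ x ∈ G, if x < 0 then (⊤ : ℝ≥0∞) else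
          ENNReal.ofReal (x * Real.log (x / μ) - x + μ)) < ENNReal.ofReal c →
      ∀ᶠ n : ℕ in atTop,
        Real.exp (-c * n)
          ≤ (P {ω | (∑ i ∈ Finset.range n, (X i ω : ℝ)) / n ∈ G}).toReal) :=
  cramer_poisson_general P μ hμ X hiid hlaw
end
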